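/- Let α be a composition of n. The operators π_i^{Ā*} on SIT(α) ∪ {0} satisfy the 0-Hecke algebra relations: (π_i^{Ā*})∘(π_i^{Ā*}) = π_i^{Ā*} for all 1 ≤ i ≤ n−1; π_i^{Ā*}∘π_j^{Ā*} = π_j^{Ā*}∘π_i^{Ā*} whenever |i−j| ≥ 2; and π_i^{Ā*}∘π_{i+1}^{Ā*}∘π_i^{Ā*} = π_{i+1}^{Ā*}∘π_i^{Ā*}∘π_{i+1}^{Ā*} for all 1 ≤ i ≤ n−2. -/

import Mathlib

open Classical

namespace ImmHecke

/-- A filling assigns a natural-number entry to each cell `(row, column)` (0-indexed);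
row `0` is the bottom row.  Cells outside the diagram carry the junk value `0`. -/
abbrev Filling : Type := ℕ × ℕ → ℕ

/-- `c` is a cell of the diagram of the composition `α` (0-indexed rows and columns;
row `i` has `α_i` cells). -/
def IsCell (α : List ℕ) (c : ℕ × ℕ) : Prop :=
  c.1 < α.length ∧ c.2 < α.getD c.1 0

/-- `α` is a composition of `n`: a list of positive integers summing to `n`. -/
def IsComposition (α : List ℕ) (n : ℕ) : Prop :=
  (∀ a ∈ α, 0 < a) ∧ α.sum = n

/-- `T` is a bijective filling of the diagram of `α` with the entries `1, …, n`
(where `n = α.sum`), and with value `0` off the diagram. -/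
def IsStdFilling (α : List ℕ) (T : Filling) : Prop :=
  (∀ c, ¬ IsCell α c → T c = 0) ∧
  (∀ c, IsCell α c → 1 ≤ T c ∧ T c ≤ α.sum) ∧
  (∀ c c', IsCell α c → IsCell α c' → T c = T c' → c = c') ∧
  (∀ m, 1 ≤ m → m ≤ α.sum → ∃ c, IsCell α c ∧ T c = m)

/-- A standard immaculate tableau of shape `α`: a bijective standard filling whose
first-column entries strictly increase bottom to top and whose rows strictly
increase left to right. -/
def IsSIT (α : List ℕ) (T : Filling) : Prop :=
  IsStdFilling α T ∧
  (∀ i i' : ℕ, IsCell α (i, 0) → IsCell α (i', 0) → i < i' → T (i, 0) < T (i', 0)) ∧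
  (∀ i j j' : ℕ, IsCell α (i, j) → IsCell α (i, j') → j < j' → T (i, j) < T (i, j'))

/-- A standard extended tableau of shape `α`: a bijective standard filling whose rows
strictly increase left to right and all of whose columns strictly increase
bottom to top.  Note `SET(α) ⊆ SIT(α)`. -/
def IsSET (α : List ℕ) (T : Filling) : Prop :=
  IsStdFilling α T ∧
  (∀ i j j' : ℕ, IsCell α (i, j) → IsCell α (i, j') → j < j' → T (i, j) < T (i, j')) ∧
  (∀ i i' j : ℕ, IsCell α (i, j) → IsCell α (i', j) → i < i' → T (i, j) < T (i', j))

/-- `SIT*(α)`: standard immaculate tableaux whose first column contains exactly the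
entries `1, 2, …, ℓ(α)`. -/
def IsSITstar (α : List ℕ) (T : Filling) : Prop :=
  IsSIT α T ∧
  (∀ i, IsCell α (i, 0) → 1 ≤ T (i, 0) ∧ T (i, 0) ≤ α.length) ∧
  (∀ m, 1 ≤ m → m ≤ α.length → ∃ i, IsCell α (i, 0) ∧ T (i, 0) = m)

/-- In `T`, the entry `m+1` lies in a row strictly above the row of `m`. -/
def SuccAbove (α : List ℕ) (T : Filling) (m : ℕ) : Prop :=
  ∃ c c', IsCell α c ∧ IsCell α c' ∧ T c = m ∧ T c' = m + 1 ∧ c.1 < c'.1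

/-- In `T`, the entries `m` and `m+1` lie in the same row. -/
def SuccSameRow (α : List ℕ) (T : Filling) (m : ℕ) : Prop :=
  ∃ c c', IsCell α c ∧ IsCell α c' ∧ T c = m ∧ T c' = m + 1 ∧ c.1 = c'.1

/-- In `T`, the entry `m+1` lies in a row strictly below the row of `m`. -/
def SuccBelow (α : List ℕ) (T : Filling) (m : ℕ) : Prop :=
  ∃ c c', IsCell α c ∧ IsCell α c' ∧ T c = m ∧ T c' = m + 1 ∧ c'.1 < c.1

/-- In `T`, the entries `m` and `m+1` are both in the first column. -/
def BothFirstColumn (α : List ℕ) (T : Filling) (m : ℕ) : Prop :=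
  ∃ c c', IsCell α c ∧ IsCell α c' ∧ T c = m ∧ T c' = m + 1 ∧ c.2 = 0 ∧ c'.2 = 0

/-- `s_i(T)`: exchange the entries `i` and `i+1` of `T`. -/
def swapEntries (i : ℕ) (T : Filling) : Filling :=
  fun c => if T c = i then i + 1 else if T c = i + 1 then i else T c

/-- The row-strict dual immaculate 0-Hecke operator `π_i^{RS*}` on `SIT(α) ∪ {0}`
(`0` is encoded as `none`): `π_i(T) = T` if `i+1` is strictly above `i`;
`π_i(T) = 0` if `i` and `i+1` are in the same row; `π_i(T) = s_i(T)` if `i+1` is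
strictly below `i`. -/
noncomputable def piRS (α : List ℕ) (i : ℕ) : Option Filling → Option Filling
  | none => none
  | some T =>
    if SuccAbove α T i then some T
    else if SuccSameRow α T i then none
    else some (swapEntries i T)

/-- The dual immaculate 0-Hecke operator `π_i^{S*}` on `SIT(α) ∪ {0}`:
`π_i(T) = T` if `i+1` is in a row weakly below `i`; `π_i(T) = 0` if `i` and `i+1`
are both in the first column; `π_i(T) = s_i(T)` if `i+1` is strictly above `i`
and `i, i+1` are not both in the first column. -/
noncomputable def piS (α : List ℕ) (i : ℕ) : Option Filling → Option Filling
  | none => none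
  | some T =>
    if SuccSameRow α T i ∨ SuccBelow α T i then some T
    else if BothFirstColumn α T i then none
    else some (swapEntries i T)

/-- The 0-Hecke operator `π_i^{A*}` on `SIT(α)`: `π_i(T) = T` if `i+1` is strictly
above `i` or in the same row as `i`; `π_i(T) = s_i(T)` if `i+1` is strictly below `i`. -/
noncomputable def piA (α : List ℕ) (i : ℕ) (T : Filling) : Filling :=
  if SuccBelow α T i then swapEntries i T else T

/-- The 0-Hecke operator `π_i^{Ā*}` on `SIT(α) ∪ {0}`: `π_i(T) = T` if `i+1` is
strictly below `i`; `π_i(T) = 0` if `i` and `i+1` are in the same row or both in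
the first column; `π_i(T) = s_i(T)` if `i+1` is strictly above `i` and `i, i+1`
are not both in the first column. -/
noncomputable def piAbar (α : List ℕ) (i : ℕ) : Option Filling → Option Filling
  | none => none
  | some T =>
    if SuccBelow α T i then some T
    else if SuccSameRow α T i ∨ BothFirstColumn α T i then none
    else some (swapEntries i T)

/-- `x` belongs to `SIT(α) ∪ {0}` (with `0 = none`). -/
def InSITZ (α : List ℕ) (x : Option Filling) : Prop :=
  ∀ T, x = some T → IsSIT α T

/-- Successively apply the operators `π_{i_1}^{RS*}, …, π_{i_r}^{RS*}` (the list `l = [i_1, …, i_r]`). -/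
noncomputable def applySeqRS (α : List ℕ) (l : List ℕ) (x : Option Filling) : Option Filling :=
  l.foldl (fun y i => piRS α i y) x

/-- Successively apply the operators `π_{i_1}^{S*}, …, π_{i_r}^{S*}`. -/
noncomputable def applySeqS (α : List ℕ) (l : List ℕ) (x : Option Filling) : Option Filling :=
  l.foldl (fun y i => piS α i y) x

/-- The relation `T₁ ≼ T₂` on `SIT(α)`: some sequence of operators `π_i^{RS*}`
(indices in `{1, …, n-1}`, possibly empty) sends `T₁` to `T₂`. -/
def preRS (α : List ℕ) (T₁ T₂ : Filling) : Prop :=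
  ∃ l : List ℕ, (∀ i ∈ l, 1 ≤ i ∧ i ≤ α.sum - 1) ∧ applySeqRS α l (some T₁) = some T₂

/-- The one-line notation of `σ(T)`: read the entries of `T` from right to left in
each row, rows from top to bottom. -/
def readingWord (α : List ℕ) (T : Filling) : List ℕ :=
  ((List.range α.length).reverse).flatMap
    (fun i => ((List.range (α.getD i 0)).map fun j => T (i, j)).reverse)

/-- The number of inversions of a word `w`: pairs of positions `p < q` with `w p > w q`. -/
def inversions (w : List ℕ) : ℕ :=
  ((Finset.range w.length ×ˢ Finset.range w.length).filter
    (fun pq : ℕ × ℕ => pq.1 < pq.2 ∧ w.getD pq.2 0 < w.getD pq.1 0)).card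

/-- `S⁰_α`: first column contains `1, …, ℓ` bottom to top; the remaining cells are
filled with `ℓ+1, …, n` consecutively, reading rows from top to bottom and left to
right within each row. -/
noncomputable def S0 (α : List ℕ) : Filling := fun c =>
  if IsCell α c then
    if c.2 = 0 then c.1 + 1
    else
      α.length + (((List.range α.length).filter fun r => c.1 < r).map fun r => α.getD r 0 - 1).sum + c.2
  else 0

/-- `S^{row}_α`: the row superstandard tableau, entries `1, …, n` placed consecutively
reading rows bottom to top, left to right within each row. -/
noncomputable def Srow (α : List ℕ) : Filling := fun c =>
  if IsCell α c then (α.take c.1).sum + c.2 + 1 else 0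

/-- `S^{row*}_α`: first column contains `1, …, ℓ` bottom to top; the remaining cells
are filled with `ℓ+1, …, n` consecutively, reading rows bottom to top, left to right
within each row. -/
noncomputable def SrowStar (α : List ℕ) : Filling := fun c =>
  if IsCell α c then
    if c.2 = 0 then c.1 + 1
    else α.length + ((List.range c.1).map fun r => α.getD r 0 - 1).sum + c.2
  else 0

/-- `S^{col}_α`: the column superstandard tableau, entries `1, …, n` placed
consecutively reading columns bottom to top, columns left to right. -/
noncomputable def Scol (α : List ℕ) : Filling := fun c =>
  if IsCell α c then
    ((List.range c.2).map fun j' =>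
        ((List.range α.length).filter fun r => j' < α.getD r 0).length).sum
      + ((List.range c.1).filter fun r => c.2 < α.getD r 0).length + 1
  else 0

/-- The image of a basis element of `V_α` under the linearly extended operator
`π_i^{RS*}` (the value `0` of the operator is interpreted as the zero vector). -/
noncomputable def piTargetRS (α : List ℕ) (i : ℕ) (T : {T : Filling // IsSIT α T}) :
    ({T : Filling // IsSIT α T} →₀ ℚ) :=
  match piRS α i (some T.val) with
  | none => 0
  | some T' => if h : IsSIT α T' then Finsupp.single ⟨T', h⟩ 1 else 0

/-- The operator `π_i^{RS*}` extended to a `ℚ`-linear endomorphism of the free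
`ℚ`-vector space `V_α` with basis `SIT(α)`. -/
noncomputable def piRSLin (α : List ℕ) (i : ℕ) :
    ({T : Filling // IsSIT α T} →₀ ℚ) →ₗ[ℚ] ({T : Filling // IsSIT α T} →₀ ℚ) :=
  Finsupp.lsum ℚ fun T => LinearMap.toSpanSingleton ℚ _ (piTargetRS α i T)

/-- The image of a basis element of `Z_α` under the linearly extended operator
`π_i^{RS*}`. -/
noncomputable def piTargetSET (α : List ℕ) (i : ℕ) (T : {T : Filling // IsSET α T}) :
    ({T : Filling // IsSET α T} →₀ ℚ) :=
  match piRS α i (some T.val) with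
  | none => 0
  | some T' => if h : IsSET α T' then Finsupp.single ⟨T', h⟩ 1 else 0

/-- The operator `π_i^{RS*}` extended to a `ℚ`-linear endomorphism of the free
`ℚ`-vector space `Z_α` with basis `SET(α)`. -/
noncomputable def piRSLinSET (α : List ℕ) (i : ℕ) :
    ({T : Filling // IsSET α T} →₀ ℚ) →ₗ[ℚ] ({T : Filling // IsSET α T} →₀ ℚ) :=
  Finsupp.lsum ℚ fun T => LinearMap.toSpanSingleton ℚ _ (piTargetSET α i T)

/-! Whether `π_i` fixes, kills or swaps a bijective filling `T` is decided by the cells `p`, `q`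
holding `i` and `i + 1` alone, and `s_i` exchanges these two cells. So after a swap `i + 1` lies
strictly below `i`, which gives idempotence; `s_j` moves neither `i` nor `i + 1` when
`|i - j| ≥ 2`, which gives commutation; and the braid relation becomes a finite check on the
cells of `i`, `i + 1`, `i + 2`, with the filling carried along as a product of swaps. -/

section Swap

variable {i j v : ℕ} {T : Filling} {c : ℕ × ℕ}

lemma swapEntries_apply_of_eq (h : T c = i) : swapEntries i T c = i + 1 := by
  simp [swapEntries, h]

lemma swapEntries_apply_of_eq_succ (h : T c = i + 1) : swapEntries i T c = i := by
  simp [swapEntries, h]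

lemma swapEntries_apply_of_ne (h : T c ≠ i) (h' : T c ≠ i + 1) : swapEntries i T c = T c := by
  simp [swapEntries, h, h']

lemma swapEntries_apply_eq_iff_of_ne (h : v ≠ j) (h' : v ≠ j + 1) :
    swapEntries j T c = v ↔ T c = v := by
  simp only [swapEntries]; split_ifs <;> omega

lemma swapEntries_comm_of_far (hfar : i + 2 ≤ j ∨ j + 2 ≤ i) (T : Filling) :
    swapEntries i (swapEntries j T) = swapEntries j (swapEntries i T) := by
  funext c; simp only [swapEntries]; split_ifs <;> omega

lemma swapEntries_braid (i : ℕ) (T : Filling) :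
    swapEntries i (swapEntries (i + 1) (swapEntries i T)) =
      swapEntries (i + 1) (swapEntries i (swapEntries (i + 1) T)) := by
  funext c; simp only [swapEntries]; split_ifs <;> omega

end Swap

section StdFilling

variable {α : List ℕ} {T : Filling} {m : ℕ} {p q : ℕ × ℕ}

lemma isStdFilling_swapEntries (hT : IsStdFilling α T) (hm : 1 ≤ m) (hm' : m + 1 ≤ α.sum) :
    IsStdFilling α (swapEntries m T) := by
  obtain ⟨hoff, hbd, hinj, hsurj⟩ := hT
  refine ⟨fun c hc => ?_, fun c hc => ?_, fun c c' hc hc' h => hinj c c' hc hc' ?_, ?_⟩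
  · have h0 := hoff c hc
    rwa [swapEntries_apply_of_ne (by omega) (by omega)]
  · have := hbd c hc
    simp only [swapEntries]; split_ifs <;> omega
  · revert h; simp only [swapEntries]; split_ifs <;> omega
  · intro v hv hv'
    by_cases h : v = m
    · obtain ⟨d, hd, he⟩ := hsurj (m + 1) (by omega) hm'
      exact ⟨d, hd, by subst h; exact swapEntries_apply_of_eq_succ he⟩
    by_cases h' : v = m + 1
    · obtain ⟨d, hd, he⟩ := hsurj m hm (by omega)
      exact ⟨d, hd, by subst h'; exact swapEntries_apply_of_eq he⟩
    obtain ⟨d, hd, he⟩ := hsurj v hv hv'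
    exact ⟨d, hd, by rw [swapEntries_apply_of_ne (he ▸ h) (he ▸ h'), he]⟩

lemma exists_cells_iff_of_cells (hT : IsStdFilling α T) (hp : IsCell α p) (hq : IsCell α q)
    (vp : T p = m) (vq : T q = m + 1) (P : ℕ × ℕ → ℕ × ℕ → Prop) :
    (∃ c c', IsCell α c ∧ IsCell α c' ∧ T c = m ∧ T c' = m + 1 ∧ P c c') ↔ P p q := by
  refine ⟨?_, fun h => ⟨p, q, hp, hq, vp, vq, h⟩⟩
  rintro ⟨c, c', hc, hc', vc, vc', h⟩
  rwa [hT.2.2.1 c p hc hp (vc.trans vp.symm), hT.2.2.1 c' q hc' hq (vc'.trans vq.symm)] at h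

lemma piAbar_some_of_cells (hT : IsStdFilling α T) (hp : IsCell α p) (hq : IsCell α q)
    (vp : T p = m) (vq : T q = m + 1) :
    piAbar α m (some T) =
      if q.1 < p.1 then some T
      else if p.1 = q.1 ∨ (p.2 = 0 ∧ q.2 = 0) then none
      else some (swapEntries m T) := by
  have key := exists_cells_iff_of_cells hT hp hq vp vq
  simp only [piAbar, SuccBelow, SuccSameRow, BothFirstColumn, key]

lemma piAbar_idem_of_isStdFilling (hT : IsStdFilling α T) (hm : 1 ≤ m) (hm' : m + 1 ≤ α.sum) :
    piAbar α m (piAbar α m (some T)) = piAbar α m (some T) := by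
  obtain ⟨p, hp, vp⟩ := hT.2.2.2 m hm (by omega)
  obtain ⟨q, hq, vq⟩ := hT.2.2.2 (m + 1) (by omega) hm'
  rw [piAbar_some_of_cells hT hp hq vp vq]
  split_ifs with hbelow hkill
  · rw [piAbar_some_of_cells hT hp hq vp vq, if_pos hbelow]
  · rfl
  · rw [piAbar_some_of_cells (isStdFilling_swapEntries hT hm hm') hq hp
      (swapEntries_apply_of_eq_succ vq) (swapEntries_apply_of_eq vp), if_pos (by omega)]

end StdFilling

lemma piAbar_some_swapEntries_of_far (α : List ℕ) {i j : ℕ} (hfar : i + 2 ≤ j ∨ j + 2 ≤ i)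
    (T : Filling) :
    piAbar α i (some (swapEntries j T)) = (piAbar α i (some T)).map (swapEntries j) := by
  have hi : ∀ c, swapEntries j T c = i ↔ T c = i := fun c =>
    swapEntries_apply_eq_iff_of_ne (by omega) (by omega)
  have hi' : ∀ c, swapEntries j T c = i + 1 ↔ T c = i + 1 := fun c =>
    swapEntries_apply_eq_iff_of_ne (by omega) (by omega)
  have hB : SuccBelow α (swapEntries j T) i ↔ SuccBelow α T i := by simp only [SuccBelow, hi, hi']
  have hS : SuccSameRow α (swapEntries j T) i ↔ SuccSameRow α T i := by
    simp only [SuccSameRow, hi, hi']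
  have hF : BothFirstColumn α (swapEntries j T) i ↔ BothFirstColumn α T i := by
    simp only [BothFirstColumn, hi, hi']
  rw [piAbar.eq_2, piAbar.eq_2, hB, hS, hF]
  split_ifs <;> simp [swapEntries_comm_of_far hfar]

lemma piAbar_comm_of_far (α : List ℕ) {i j : ℕ} (hfar : i + 2 ≤ j ∨ j + 2 ≤ i)
    (x : Option Filling) : piAbar α i (piAbar α j x) = piAbar α j (piAbar α i x) := by
  cases x with
  | none => rfl
  | some T =>
    have hfar' : j + 2 ≤ i ∨ i + 2 ≤ j := hfar.symm
    rw [piAbar.eq_2 α j, piAbar.eq_2 α i]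
    simp only [apply_ite (piAbar α i), apply_ite (piAbar α j), piAbar_some_swapEntries_of_far α hfar,
      piAbar_some_swapEntries_of_far α hfar']
    simp only [piAbar]
    split_ifs <;> simp [swapEntries_comm_of_far hfar]

section Braid

/-- A filling together with the cells holding `i`, `i + 1` and `i + 2`. -/
abbrev Marked : Type := Filling × (ℕ × ℕ) × (ℕ × ℕ) × (ℕ × ℕ)

noncomputable def markedPiLow (i : ℕ) : Option Marked → Option Marked
  | none => none
  | some (T, p, q, r) =>
    if q.1 < p.1 then some (T, p, q, r)
    else if p.1 = q.1 ∨ (p.2 = 0 ∧ q.2 = 0) then none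
    else some (swapEntries i T, q, p, r)

noncomputable def markedPiHigh (i : ℕ) : Option Marked → Option Marked
  | none => none
  | some (T, p, q, r) =>
    if r.1 < q.1 then some (T, p, q, r)
    else if q.1 = r.1 ∨ (q.2 = 0 ∧ r.2 = 0) then none
    else some (swapEntries (i + 1) T, p, r, q)

def IsMarking (α : List ℕ) (i : ℕ) : Option Marked → Prop
  | none => True
  | some (T, p, q, r) => IsStdFilling α T ∧ IsCell α p ∧ IsCell α q ∧ IsCell α r ∧
      T p = i ∧ T q = i + 1 ∧ T r = i + 2

variable {α : List ℕ} {i : ℕ}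

lemma markedPiLow_spec (hi : 1 ≤ i) (hsum : i + 2 ≤ α.sum) :
    ∀ s, IsMarking α i s →
      piAbar α i (s.map Prod.fst) = (markedPiLow i s).map Prod.fst ∧
        IsMarking α i (markedPiLow i s)
  | none, _ => ⟨rfl, trivial⟩
  | some (T, p, q, r), ⟨hT, hp, hq, hr, vp, vq, vr⟩ => by
    simp only [Option.map_some, markedPiLow, piAbar_some_of_cells hT hp hq vp vq]
    split_ifs
    · exact ⟨rfl, hT, hp, hq, hr, vp, vq, vr⟩
    · exact ⟨rfl, trivial⟩
    · refine ⟨rfl, isStdFilling_swapEntries hT hi (by omega), hq, hp, hr,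
        swapEntries_apply_of_eq_succ vq, swapEntries_apply_of_eq vp, ?_⟩
      rwa [swapEntries_apply_of_ne (by omega) (by omega)]

lemma markedPiHigh_spec (hsum : i + 2 ≤ α.sum) :
    ∀ s, IsMarking α i s →
      piAbar α (i + 1) (s.map Prod.fst) = (markedPiHigh i s).map Prod.fst ∧
        IsMarking α i (markedPiHigh i s)
  | none, _ => ⟨rfl, trivial⟩
  | some (T, p, q, r), ⟨hT, hp, hq, hr, vp, vq, vr⟩ => by
    simp only [Option.map_some, markedPiHigh, piAbar_some_of_cells hT hq hr vq vr]
    split_ifs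
    · exact ⟨rfl, hT, hp, hq, hr, vp, vq, vr⟩
    · exact ⟨rfl, trivial⟩
    · refine ⟨rfl, isStdFilling_swapEntries hT (by omega) hsum, hp, hr, hq, ?_,
        swapEntries_apply_of_eq_succ vr, swapEntries_apply_of_eq vq⟩
      rwa [swapEntries_apply_of_ne (by omega) (by omega)]

set_option linter.unusedSimpArgs false in
lemma markedPi_braid (i : ℕ) (s : Option Marked) :
    markedPiLow i (markedPiHigh i (markedPiLow i s)) =
      markedPiHigh i (markedPiLow i (markedPiHigh i s)) := by
  rcases s with _ | ⟨T, p, q, r⟩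
  · rfl
  simp only [markedPiLow, markedPiHigh]
  split_ifs <;> (repeat' first | split_ifs | simp only [markedPiLow, markedPiHigh]) <;>
    first | rfl | omega | rw [swapEntries_braid]

lemma piAbar_braid_of_isStdFilling {T : Filling} (hT : IsStdFilling α T) (hi : 1 ≤ i)
    (hsum : i + 2 ≤ α.sum) :
    piAbar α i (piAbar α (i + 1) (piAbar α i (some T))) =
      piAbar α (i + 1) (piAbar α i (piAbar α (i + 1) (some T))) := by
  obtain ⟨p, hp, vp⟩ := hT.2.2.2 i hi (by omega)
  obtain ⟨q, hq, vq⟩ := hT.2.2.2 (i + 1) (by omega) (by omega)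
  obtain ⟨r, hr, vr⟩ := hT.2.2.2 (i + 2) (by omega) hsum
  have hs : IsMarking α i (some (T, p, q, r)) := ⟨hT, hp, hq, hr, vp, vq, vr⟩
  obtain ⟨e₁, h₁⟩ := markedPiLow_spec hi hsum _ hs
  obtain ⟨e₂, h₂⟩ := markedPiHigh_spec hsum _ h₁
  obtain ⟨e₃, -⟩ := markedPiLow_spec hi hsum _ h₂
  obtain ⟨f₁, k₁⟩ := markedPiHigh_spec hsum _ hs
  obtain ⟨f₂, k₂⟩ := markedPiLow_spec hi hsum _ k₁
  obtain ⟨f₃, -⟩ := markedPiHigh_spec hsum _ k₂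
  have hT' : some T = (some (T, p, q, r)).map Prod.fst := rfl
  rw [hT', e₁, e₂, e₃, f₁, f₂, f₃, markedPi_braid]

end Braid

theorem piAbar_hecke_relations (n : ℕ) (α : List ℕ) (hα : IsComposition α n) :
    (∀ i, 1 ≤ i → i ≤ n - 1 →
      ∀ x : Option Filling, InSITZ α x → piAbar α i (piAbar α i x) = piAbar α i x) ∧
    (∀ i j, 1 ≤ i → i ≤ n - 1 → 1 ≤ j → j ≤ n - 1 → (i + 2 ≤ j ∨ j + 2 ≤ i) →
      ∀ x : Option Filling, InSITZ α x →
        piAbar α i (piAbar α j x) = piAbar α j (piAbar α i x)) ∧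
    (∀ i, 1 ≤ i → i + 1 ≤ n - 1 →
      ∀ x : Option Filling, InSITZ α x →
        piAbar α i (piAbar α (i + 1) (piAbar α i x)) =
          piAbar α (i + 1) (piAbar α i (piAbar α (i + 1) x))) := by
  obtain ⟨-, rfl⟩ := hα
  refine ⟨?_, fun i j _ _ _ _ hfar x _ => piAbar_comm_of_far α hfar x, ?_⟩
  · rintro i hi hin (_ | T) hx
    · rfl
    · exact piAbar_idem_of_isStdFilling (hx T rfl).1 hi (by omega)
  · rintro i hi hin (_ | T) hx
    · rfl
    · exact piAbar_braid_of_isStdFilling (hx T rfl).1 hi (by omega)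

end ImmHecke
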